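/- Assume p₁ ≥ p₂ > 0 and let c_S be a real number with p(z) = p₁z₁ + p₂z₂ + c_S > 0 on the closure of the triangle P. Let a = −Scal_Σ/2 for a real number Scal_Σ, let H = (D²u_FS)⁻¹ with entries H_{ij}, and for z in the interior P⁰ define A_{il}(z) = −p₁ ∂H_{1i}/∂z_l − p₂ ∂H_{2i}/∂z_l + (1/p(z))(p₁H_{1i} + p₂H_{2i}) p_l, and K(z) = (1/(4p(z)⁴)) (2a·p(z) + p₁²H_{11} + 2p₁p₂H_{12} + p₂²H_{22})² + (1/(4p(z)²)) Σ_{i,l=1}² A_{il}(z) A_{li}(z) + 4/3. Then for every z ∈ P⁰: K(z) ≤ (1/p(z)²) ( Scal_Σ² + 90 p₁⁴/p(z)² + (4p₁ + 24p₁²/p(z))² ) + 4/3. -/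

import Mathlib

open Real Set

noncomputable section

/-- The plane `ℝ²` with the Euclidean metric. -/
abbrev E2 : Type := EuclideanSpace ℝ (Fin 2)

/-- Partial derivative in the `i`-th coordinate direction. -/
def pder (i : Fin 2) (f : E2 → ℝ) : E2 → ℝ :=
  fun z => fderiv ℝ f z (EuclideanSpace.single i 1)

/-- The Hessian matrix `v_{ij}` of a function on `ℝ²`. -/
def Hess (v : E2 → ℝ) (z : E2) : Matrix (Fin 2) (Fin 2) ℝ :=
  Matrix.of fun i j => pder j (pder i v) z

/-- The inverse Hessian `v^{ij}`. -/
def invHess (v : E2 → ℝ) (z : E2) : Matrix (Fin 2) (Fin 2) ℝ :=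
  (Hess v z)⁻¹

/-- `v^{ij}_{kl} = ∂² v^{ij} / ∂z_k ∂z_l`. -/
def invHessD2 (v : E2 → ℝ) (i j k l : Fin 2) : E2 → ℝ :=
  pder l (pder k fun z => invHess v z i j)

/-- The interior `P⁰` of the triangle with vertices `(-1,-1)`, `(-1,2)`, `(2,-1)`. -/
def Tin : Set E2 := {z | 0 < 1 + z 0 ∧ 0 < 1 + z 1 ∧ 0 < 1 - z 0 - z 1}

/-- The closed triangle with vertices `(-1,-1)`, `(-1,2)`, `(2,-1)`. -/
def Tcl : Set E2 := {z | 0 ≤ 1 + z 0 ∧ 0 ≤ 1 + z 1 ∧ 0 ≤ 1 - z 0 - z 1}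

/-- The symplectic potential of the Fubini–Study metric on `ℂP²` in the class `c₁(O(3))`. -/
def uFS (z : E2) : ℝ :=
  (1 / 2) * ((1 + z 0) * Real.log (1 + z 0) + (1 + z 1) * Real.log (1 + z 1) +
    (1 - z 0 - z 1) * Real.log (1 - z 0 - z 1))

/-- The affine weight `p(z) = p₁ z₁ + p₂ z₂ + c_S`. -/
def pT (p₁ p₂ cS : ℝ) (z : E2) : ℝ := p₁ * z 0 + p₂ * z 1 + cS

/-- `A_{il}(z) = -p₁ ∂H_{1i}/∂z_l - p₂ ∂H_{2i}/∂z_l + (1/p(z))(p₁ H_{1i} + p₂ H_{2i}) p_l`,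
where `H = (D²u_FS)⁻¹`. -/
def Amat (p₁ p₂ cS : ℝ) (i l : Fin 2) (z : E2) : ℝ :=
  -p₁ * pder l (fun w => invHess uFS w 0 i) z - p₂ * pder l (fun w => invHess uFS w 1 i) z +
    (1 / pT p₁ p₂ cS z) * (p₁ * invHess uFS z 0 i + p₂ * invHess uFS z 1 i) * ![p₁, p₂] l

/-- `K(z)`: the squared norm of the bisectional curvature, over `z`, of the admissible metric
on `P(O ⊕ L₁ ⊕ L₂)` with Fubini–Study fiber potential, where `a = -Scal_Σ/2`. -/
def Kfun (p₁ p₂ cS a : ℝ) (z : E2) : ℝ :=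
  (1 / (4 * pT p₁ p₂ cS z ^ 4)) *
      (2 * a * pT p₁ p₂ cS z + p₁ ^ 2 * invHess uFS z 0 0 +
        2 * p₁ * p₂ * invHess uFS z 0 1 + p₂ ^ 2 * invHess uFS z 1 1) ^ 2 +
    (1 / (4 * pT p₁ p₂ cS z ^ 2)) *
      (∑ i, ∑ l, Amat p₁ p₂ cS i l z * Amat p₁ p₂ cS l i z) + 4 / 3

/-! On `P⁰`, in the coordinates `x = 1 + z₀`, `y = 1 + z₁`, `w = 3 - x - y`, the Hessian of `u_FS`
is `½ (diag(1/x, 1/y) + (1/w) 𝟙𝟙ᵀ)`, whose inverse `H` is a quadratic polynomial in `(x, y)`.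
On the triangle `x, y > 0`, `x + y < 3` the entries of `H` and of its first derivatives are
bounded, which gives `|pᵀHp| ≤ 3p₁²` and `|A_{il}| ≤ 4p₁ + 3p₁²/(2p(z))`. Then
`Σ A_{il}A_{li} ≤ 4 max |A_{il}|²` and `(a + b)² ≤ 2a² + 2b²` yield the bound with room to spare. -/

open Filter Topology

lemma pder_eq_of_hasFDerivAt {f : E2 → ℝ} {f' : E2 →L[ℝ] ℝ} {z : E2} (h : HasFDerivAt f f' z)
    (i : Fin 2) : pder i f z = f' (EuclideanSpace.single i 1) := by
  rw [pder, h.fderiv]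

lemma pder_congr_of_eventuallyEq {f g : E2 → ℝ} {z : E2} (h : f =ᶠ[𝓝 z] g) (i : Fin 2) :
    pder i f z = pder i g z := by
  rw [pder, pder, h.fderiv_eq]

abbrev coord (k : Fin 2) : E2 →L[ℝ] ℝ := EuclideanSpace.proj k

lemma hasFDerivAt_one_add_coord (k : Fin 2) (z : E2) :
    HasFDerivAt (fun w : E2 => 1 + w k) (coord k) z :=
  (coord k).hasFDerivAt.const_add 1

lemma hasFDerivAt_one_sub_coord_sub_coord (z : E2) :
    HasFDerivAt (fun w : E2 => 1 - w 0 - w 1) (-coord 0 - coord 1) z :=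
  ((coord 0).hasFDerivAt.const_sub 1).sub (coord 1).hasFDerivAt

lemma isOpen_Tin : IsOpen Tin := by
  simp only [Tin, ofPred_and]
  refine (isOpen_lt ?_ ?_).inter ((isOpen_lt ?_ ?_).inter (isOpen_lt ?_ ?_)) <;> fun_prop

lemma Tin_subset_Tcl : Tin ⊆ Tcl := fun _ ⟨h0, h1, h2⟩ => ⟨h0.le, h1.le, h2.le⟩

lemma one_add_coord_pos {z : E2} (hz : z ∈ Tin) (k : Fin 2) : 0 < 1 + z k := by
  fin_cases k
  exacts [hz.1, hz.2.1]

lemma one_add_coord_mem_triangle {z : E2} (hz : z ∈ Tin) :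
    0 < 1 + z 0 ∧ 0 < 1 + z 1 ∧ (1 + z 0) + (1 + z 1) < 3 :=
  ⟨hz.1, hz.2.1, by linarith [hz.2.2]⟩

lemma hasFDerivAt_uFS {z : E2} (hz : z ∈ Tin) :
    HasFDerivAt uFS ((1 / 2 : ℝ) • ((log (1 + z 0) + 1) • coord 0 + (log (1 + z 1) + 1) • coord 1
      + (log (1 - z 0 - z 1) + 1) • (-coord 0 - coord 1))) z := by
  have mul_log {f : E2 → ℝ} {f' : E2 →L[ℝ] ℝ} (hf : HasFDerivAt f f' z) (hpos : 0 < f z) :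
      HasFDerivAt (fun w => f w * log (f w)) ((log (f z) + 1) • f') z :=
    (hasDerivAt_mul_log hpos.ne').comp_hasFDerivAt (h₂ := fun t => t * log t) z hf
  exact (((mul_log (hasFDerivAt_one_add_coord 0 z) hz.1).add
    (mul_log (hasFDerivAt_one_add_coord 1 z) hz.2.1)).add
      (mul_log (hasFDerivAt_one_sub_coord_sub_coord z) hz.2.2)).const_mul (1 / 2)

lemma pder_uFS (i : Fin 2) {z : E2} (hz : z ∈ Tin) :
    pder i uFS z = 1 / 2 * (log (1 + z i) - log (1 - z 0 - z 1)) := by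
  rw [pder_eq_of_hasFDerivAt (hasFDerivAt_uFS hz)]
  fin_cases i <;> simp <;> ring

lemma pder_pder_uFS (i l : Fin 2) {z : E2} (hz : z ∈ Tin) :
    pder l (pder i uFS) z = 1 / 2 * ((if l = i then (1 + z i)⁻¹ else 0) + (1 - z 0 - z 1)⁻¹) := by
  have hgrad : HasFDerivAt (fun w : E2 => 1 / 2 * (log (1 + w i) - log (1 - w 0 - w 1)))
      ((1 / 2 : ℝ) • ((1 + z i)⁻¹ • coord i - (1 - z 0 - z 1)⁻¹ • (-coord 0 - coord 1))) z :=
    (((hasFDerivAt_one_add_coord i z).log (one_add_coord_pos hz i).ne').sub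
      ((hasFDerivAt_one_sub_coord_sub_coord z).log hz.2.2.ne')).const_mul (1 / 2)
  rw [pder_congr_of_eventuallyEq (eventually_of_mem (isOpen_Tin.mem_nhds hz)
    fun w hw => pder_uFS i hw), pder_eq_of_hasFDerivAt hgrad]
  fin_cases i <;> fin_cases l <;> simp

lemma hess_uFS {z : E2} (hz : z ∈ Tin) :
    Hess uFS z = (1 / 2 : ℝ) • !![(1 + z 0)⁻¹ + (1 - z 0 - z 1)⁻¹, (1 - z 0 - z 1)⁻¹;
      (1 - z 0 - z 1)⁻¹, (1 + z 1)⁻¹ + (1 - z 0 - z 1)⁻¹] := by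
  ext i j
  rw [Hess, Matrix.of_apply, pder_pder_uFS i j hz]
  fin_cases i <;> fin_cases j <;> simp

/-- `(D²u_FS)⁻¹` in the coordinates `x = 1 + z₀`, `y = 1 + z₁`. -/
def fsInvHess (x y : ℝ) : Matrix (Fin 2) (Fin 2) ℝ :=
  !![2 * x - 2 / 3 * x ^ 2, -(2 / 3 * x * y); -(2 / 3 * x * y), 2 * y - 2 / 3 * y ^ 2]

/-- `l ↦ ∂(D²u_FS)⁻¹/∂z_l`, in the coordinates of `fsInvHess`. -/
def fsInvHessDeriv (x y : ℝ) : Fin 2 → Matrix (Fin 2) (Fin 2) ℝ :=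
  ![!![2 - 4 / 3 * x, -(2 / 3) * y; -(2 / 3) * y, 0],
    !![0, -(2 / 3) * x; -(2 / 3) * x, 2 - 4 / 3 * y]]

lemma invHess_uFS {z : E2} (hz : z ∈ Tin) : invHess uFS z = fsInvHess (1 + z 0) (1 + z 1) := by
  have h0 := hz.1.ne'
  have h1 := hz.2.1.ne'
  have h2 := hz.2.2.ne'
  rw [invHess, hess_uFS hz]
  refine Matrix.inv_eq_right_inv ?_
  ext i j
  fin_cases i <;> fin_cases j <;> simp [fsInvHess, Matrix.mul_apply] <;> field_simp <;> ring

lemma hasFDerivAt_fsInvHess_diag (k : Fin 2) (z : E2) :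
    HasFDerivAt (fun w : E2 => 2 * (1 + w k) - 2 / 3 * (1 + w k) ^ 2)
      ((2 - 4 / 3 * (1 + z k)) • coord k) z := by
  have hx := hasFDerivAt_one_add_coord k z
  refine ((hx.const_mul 2).sub ((hx.pow 2).const_mul (2 / 3))).congr_fderiv ?_
  ext v
  simp
  ring

lemma hasFDerivAt_fsInvHess_offDiag (z : E2) :
    HasFDerivAt (fun w : E2 => -(2 / 3 * (1 + w 0) * (1 + w 1)))
      ((-(2 / 3) * (1 + z 1)) • coord 0 + (-(2 / 3) * (1 + z 0)) • coord 1) z := by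
  refine (((hasFDerivAt_one_add_coord 0 z).const_mul (2 / 3)).mul
    (hasFDerivAt_one_add_coord 1 z)).neg.congr_fderiv ?_
  ext v
  simp
  ring

lemma pder_invHess_uFS (i j l : Fin 2) {z : E2} (hz : z ∈ Tin) :
    pder l (fun w => invHess uFS w i j) z = fsInvHessDeriv (1 + z 0) (1 + z 1) l i j := by
  rw [pder_congr_of_eventuallyEq (eventually_of_mem (isOpen_Tin.mem_nhds hz)
    fun w hw => congrFun₂ (invHess_uFS hw) i j)]
  fin_cases i <;> fin_cases j <;> simp only [fsInvHess] <;> simp <;>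
    first
    | rw [pder_eq_of_hasFDerivAt (hasFDerivAt_fsInvHess_diag _ z)]
    | rw [pder_eq_of_hasFDerivAt (hasFDerivAt_fsInvHess_offDiag z)]
  all_goals fin_cases l <;> simp [fsInvHessDeriv]

section Bounds

variable {p₁ p₂ x y : ℝ}

lemma fsInvHess_diag_mem_Icc {t : ℝ} (ht : 0 < t) (ht3 : t < 3) :
    0 ≤ 2 * t - 2 / 3 * t ^ 2 ∧ 2 * t - 2 / 3 * t ^ 2 ≤ 3 / 2 :=
  ⟨by nlinarith, by nlinarith [sq_nonneg (t - 3 / 2)]⟩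

lemma abs_weighted_fsInvHess_le (hp₂ : 0 < p₂) (hp₁₂ : p₂ ≤ p₁) (hx : 0 < x) (hy : 0 < y)
    (hxy : x + y < 3) (i : Fin 2) :
    |p₁ * fsInvHess x y 0 i + p₂ * fsInvHess x y 1 i| ≤ 3 / 2 * p₁ := by
  have hxy' : x * y ≤ 9 / 4 := by nlinarith [sq_nonneg (x - y)]
  obtain ⟨hx₀, hx₁⟩ := fsInvHess_diag_mem_Icc hx (by linarith)
  obtain ⟨hy₀, hy₁⟩ := fsInvHess_diag_mem_Icc hy (by linarith)
  rw [abs_le]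
  fin_cases i <;> simp only [fsInvHess] <;> simp <;> constructor <;>
    nlinarith [mul_pos hx hy, mul_le_mul_of_nonneg_left hxy' hp₂.le]

lemma abs_weighted_fsInvHessDeriv_le (hp₂ : 0 < p₂) (hp₁₂ : p₂ ≤ p₁) (hx : 0 < x) (hy : 0 < y)
    (hxy : x + y < 3) (i l : Fin 2) :
    |p₁ * fsInvHessDeriv x y l 0 i + p₂ * fsInvHessDeriv x y l 1 i| ≤ 4 * p₁ := by
  rw [abs_le]
  fin_cases i <;> fin_cases l <;> simp only [fsInvHessDeriv] <;> simp <;> constructor <;>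
    nlinarith [mul_pos hp₂ hx, mul_pos hp₂ hy]

lemma abs_quadForm_fsInvHess_le (hp₂ : 0 < p₂) (hp₁₂ : p₂ ≤ p₁) (hx : 0 < x) (hy : 0 < y)
    (hxy : x + y < 3) :
    |p₁ ^ 2 * fsInvHess x y 0 0 + 2 * p₁ * p₂ * fsInvHess x y 0 1 + p₂ ^ 2 * fsInvHess x y 1 1|
      ≤ 3 * p₁ ^ 2 := by
  have hxy' : x * y ≤ 9 / 4 := by nlinarith [sq_nonneg (x - y)]
  obtain ⟨hx₀, hx₁⟩ := fsInvHess_diag_mem_Icc hx (by linarith)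
  obtain ⟨hy₀, hy₁⟩ := fsInvHess_diag_mem_Icc hy (by linarith)
  have hp₁ : 0 < p₁ := hp₂.trans_le hp₁₂
  rw [abs_le]
  simp only [fsInvHess]
  simp
  constructor <;>
    nlinarith [mul_pos hx hy, mul_pos hp₁ hp₂, mul_le_mul_of_nonneg_left hxy' (mul_pos hp₁ hp₂).le,
      mul_le_mul_of_nonneg_left hx₁ (sq_nonneg p₁), mul_le_mul_of_nonneg_left hy₁ (sq_nonneg p₂),
      mul_nonneg (sq_nonneg p₁) hx₀, mul_nonneg (sq_nonneg p₂) hy₀]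

end Bounds

lemma sum_mul_swap_le {ι : Type*} [Fintype ι] (A : ι → ι → ℝ) {M : ℝ}
    (hA : ∀ i j, |A i j| ≤ M) :
    ∑ i, ∑ j, A i j * A j i ≤ Fintype.card ι ^ 2 * M ^ 2 := by
  have hterm (i j : ι) : A i j * A j i ≤ M ^ 2 := by
    calc A i j * A j i ≤ |A i j| * |A j i| := by rw [← abs_mul]; exact le_abs_self _
      _ ≤ M * M := mul_le_mul (hA i j) (hA j i) (abs_nonneg _) ((abs_nonneg _).trans (hA i j))
      _ = M ^ 2 := (sq M).symm
  calc ∑ i, ∑ j, A i j * A j i ≤ ∑ _i : ι, ∑ _j : ι, M ^ 2 :=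
        Finset.sum_le_sum fun i _ => Finset.sum_le_sum fun j _ => hterm i j
    _ = Fintype.card ι ^ 2 * M ^ 2 := by simp [sq, mul_assoc]

lemma Amat_eq {p₁ p₂ cS : ℝ} {z : E2} (hz : z ∈ Tin) (i l : Fin 2) :
    Amat p₁ p₂ cS i l z =
      -(p₁ * fsInvHessDeriv (1 + z 0) (1 + z 1) l 0 i
          + p₂ * fsInvHessDeriv (1 + z 0) (1 + z 1) l 1 i)
        + (p₁ * fsInvHess (1 + z 0) (1 + z 1) 0 i + p₂ * fsInvHess (1 + z 0) (1 + z 1) 1 i)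
          * ![p₁, p₂] l / pT p₁ p₂ cS z := by
  rw [Amat, pder_invHess_uFS 0 i l hz, pder_invHess_uFS 1 i l hz, invHess_uFS hz]
  ring

lemma abs_Amat_le {p₁ p₂ cS : ℝ} (hp₂ : 0 < p₂) (hp₁₂ : p₂ ≤ p₁) {z : E2} (hz : z ∈ Tin)
    (hP : 0 < pT p₁ p₂ cS z) (i l : Fin 2) :
    |Amat p₁ p₂ cS i l z| ≤ 4 * p₁ + 3 / 2 * p₁ ^ 2 / pT p₁ p₂ cS z := by
  obtain ⟨hx, hy, hxy⟩ := one_add_coord_mem_triangle hz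
  have hp : |![p₁, p₂] l| ≤ p₁ := by
    fin_cases l <;> simp [abs_of_pos, hp₂, hp₂.trans_le hp₁₂, hp₁₂]
  rw [Amat_eq hz]
  calc _ ≤ |p₁ * fsInvHessDeriv (1 + z 0) (1 + z 1) l 0 i
            + p₂ * fsInvHessDeriv (1 + z 0) (1 + z 1) l 1 i|
          + |p₁ * fsInvHess (1 + z 0) (1 + z 1) 0 i + p₂ * fsInvHess (1 + z 0) (1 + z 1) 1 i|
            * |![p₁, p₂] l| / pT p₁ p₂ cS z := by
        rw [← abs_neg (p₁ * _ + _), ← abs_mul, ← abs_of_pos hP, ← abs_div, abs_of_pos hP]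
        exact abs_add_le _ _
    _ ≤ 4 * p₁ + 3 / 2 * p₁ * p₁ / pT p₁ p₂ cS z := by
        gcongr
        · exact abs_weighted_fsInvHessDeriv_le hp₂ hp₁₂ hx hy hxy i l
        · linarith
        · exact abs_weighted_fsInvHess_le hp₂ hp₁₂ hx hy hxy i
    _ = 4 * p₁ + 3 / 2 * p₁ ^ 2 / pT p₁ p₂ cS z := by ring

lemma curvature_bound_of_le {s P Q S p₁ : ℝ} (hP : 0 < P) (hp₁ : 0 < p₁)
    (hQ : |Q| ≤ 3 * p₁ ^ 2) (hS : S ≤ 2 ^ 2 * (4 * p₁ + 3 / 2 * p₁ ^ 2 / P) ^ 2) :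
    1 / (4 * P ^ 4) * (2 * (-s / 2) * P + Q) ^ 2 + 1 / (4 * P ^ 2) * S
      ≤ 1 / P ^ 2 * (s ^ 2 + 90 * p₁ ^ 4 / P ^ 2 + (4 * p₁ + 24 * p₁ ^ 2 / P) ^ 2) := by
  have hM : 4 * p₁ + 3 / 2 * p₁ ^ 2 / P ≤ 4 * p₁ + 24 * p₁ ^ 2 / P := by gcongr; norm_num
  set M := 4 * p₁ + 3 / 2 * p₁ ^ 2 / P
  have hQ2 : Q ^ 2 ≤ 9 * p₁ ^ 4 := by nlinarith [sq_abs Q, abs_nonneg Q]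
  have hsQ : (2 * (-s / 2) * P + Q) ^ 2 ≤ 2 * s ^ 2 * P ^ 2 + 18 * p₁ ^ 4 := by
    nlinarith [sq_nonneg (s * P + Q)]
  calc _ ≤ 1 / (4 * P ^ 4) * (2 * s ^ 2 * P ^ 2 + 18 * p₁ ^ 4)
          + 1 / (4 * P ^ 2) * (2 ^ 2 * M ^ 2) := by
        gcongr
    _ = 1 / P ^ 2 * (s ^ 2 / 2 + 9 / 2 * p₁ ^ 4 / P ^ 2 + M ^ 2) := by
        field_simp
        ring
    _ ≤ 1 / P ^ 2 * (s ^ 2 + 90 * p₁ ^ 4 / P ^ 2 + (4 * p₁ + 24 * p₁ ^ 2 / P) ^ 2) := by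
        gcongr
        · linarith [sq_nonneg s]
        · norm_num

/-- If `p₁ ≥ p₂ > 0` and `p(z) > 0` on the closed triangle, then for every `z ∈ P⁰` the squared
norm of the bisectional curvature satisfies
`K(z) ≤ (1/p(z)²)(Scal_Σ² + 90 p₁⁴/p(z)² + (4p₁ + 24p₁²/p(z))²) + 4/3`. -/
theorem bisectional_curvature_bound
    (p₁ p₂ cS ScalSigma : ℝ) (hp₁₂ : p₁ ≥ p₂) (hp₂ : p₂ > 0)
    (hpos : ∀ z ∈ Tcl, 0 < pT p₁ p₂ cS z) :
    ∀ z ∈ Tin,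
      Kfun p₁ p₂ cS (-ScalSigma / 2) z ≤
        (1 / pT p₁ p₂ cS z ^ 2) *
            (ScalSigma ^ 2 + 90 * p₁ ^ 4 / pT p₁ p₂ cS z ^ 2 +
              (4 * p₁ + 24 * p₁ ^ 2 / pT p₁ p₂ cS z) ^ 2) + 4 / 3 := by
  intro z hz
  obtain ⟨hx, hy, hxy⟩ := one_add_coord_mem_triangle hz
  have hP : 0 < pT p₁ p₂ cS z := hpos z (Tin_subset_Tcl hz)
  have hQ := abs_quadForm_fsInvHess_le hp₂ hp₁₂ hx hy hxy
  have hS := sum_mul_swap_le (fun i l => Amat p₁ p₂ cS i l z) (abs_Amat_le hp₂ hp₁₂ hz hP)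
  rw [Fintype.card_fin, Nat.cast_ofNat] at hS
  rw [Kfun, invHess_uFS hz]
  linarith [curvature_bound_of_le (s := ScalSigma) hP (hp₂.trans_le hp₁₂) hQ hS]
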